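/- Suppose p is a prime with p > 3. Then the Poisson center S(𝔫)^𝔫 equals the F-subalgebra of F[x1,…,x6] generated by x1^p, x2^p, x3^p, x4^p, x5^p, x6 and c2. -/

import Mathlib

set_option synthInstance.maxHeartbeats 1000000
set_option maxHeartbeats 1000000

noncomputable section
open MvPolynomial

/-- The quotient ring `A[T]/(f)`. -/
abbrev PolyQuot (A : Type) [CommRing A] (f : Polynomial A) : Type :=
  Polynomial A ⧸ Ideal.span {f}

/-- The quotient ring `A[T_1, …, T_k]/(f_1, …, f_k)`. -/
abbrev MvPolyQuot (k : ℕ) (A : Type) [CommRing A] (f : Fin k → MvPolynomial (Fin k) A) : Type :=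
  MvPolynomial (Fin k) A ⧸ Ideal.span (Set.range f)

variable {F : Type} [Field F] {L : Type} [LieRing L] [LieAlgebra F L] {iv : Type}

/-- The unique `F`-linear derivation of the symmetric algebra `S(L) = F[iv]` (identified with
the polynomial ring via the basis `b`) extending `ad v = ⁅v, ·⁆`. -/
def Dv (b : Module.Basis iv F L) (v : L) :
    Derivation F (MvPolynomial iv F) (MvPolynomial iv F) :=
  MvPolynomial.mkDerivation F fun j =>
    ((b.repr ⁅v, b j⁆).sum fun k c => MvPolynomial.C c * MvPolynomial.X k)

/-- The Poisson center `{f ∈ S(L) | D_v f = 0 for all v ∈ L}`, as a subalgebra. -/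
def poissonCenter (b : Module.Basis iv F L) : Subalgebra F (MvPolynomial iv F) where
  carrier := {f | ∀ v : L, Dv b v f = 0}
  mul_mem' := by
    intro x y hx hy v
    rw [Derivation.leibniz, hx v, hy v, smul_zero, smul_zero, add_zero]
  add_mem' := by
    intro x y hx hy v
    rw [map_add, hx v, hy v, add_zero]
  algebraMap_mem' := by intro r v; simp [Dv]

/-- The set of Poisson semi-invariants of the symmetric algebra `S(L)`. -/
def semiSet (b : Module.Basis iv F L) : Set (MvPolynomial iv F) :=
  {f | ∃ lam : L →ₗ[F] F, ∀ v : L, Dv b v f = lam v • f}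

/-- The set of semi-invariants of the universal enveloping algebra `U(L)`. -/
def szSet (F L : Type) [Field F] [LieRing L] [LieAlgebra F L] :
    Set (UniversalEnvelopingAlgebra F L) :=
  {u | ∃ lam : L →ₗ[F] F, ∀ v : L,
    UniversalEnvelopingAlgebra.ι F v * u - u * UniversalEnvelopingAlgebra.ι F v = lam v • u}

def g2c1 (F : Type) [Field F] : MvPolynomial (Fin 6) F := X 5

def g2c2 (F : Type) [Field F] : MvPolynomial (Fin 6) F :=
  3 * X 0 * X 5 - 3 * X 1 * X 4 + X 2 ^ 2

def g2SpN (F : Type) [Field F] (p : ℕ) : Subalgebra F (MvPolynomial (Fin 6) F) :=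
  Algebra.adjoin F {X 0 ^ p, X 1 ^ p, X 2 ^ p, X 3 ^ p, X 4 ^ p, X 5}

def g2z1 (b : Module.Basis (Fin 6) F L) : UniversalEnvelopingAlgebra F L :=
  UniversalEnvelopingAlgebra.ι F (b 5)

def g2z2 (b : Module.Basis (Fin 6) F L) : UniversalEnvelopingAlgebra F L :=
  3 * (UniversalEnvelopingAlgebra.ι F (b 0) * UniversalEnvelopingAlgebra.ι F (b 5)) - 3 * (UniversalEnvelopingAlgebra.ι F (b 1) * UniversalEnvelopingAlgebra.ι F (b 4)) + UniversalEnvelopingAlgebra.ι F (b 2) ^ 2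

/-!
Indices are shifted by one: `X i` is `x_{i+1}`; write `∂ᵢ = pderiv i` and `c₂ = g2c2 F`.

Membership in the Poisson center is a linear PDE system in `∂₀, …, ∂₄` (`X 5` is central);
since `3 ≠ 0` it says exactly that `∂ᵢ f · ∂₀ c₂ = ∂₀ f · ∂ᵢ c₂` for `i ≠ 5`. In characteristic
`p` the common kernel of `∂₀, …, ∂₄` is `A = F[X 0 ^ p, …, X 4 ^ p, X 5]`, and `∂₀ c₂ = 3 X 5 ∈ A`.
Since `X 5` is prime to `∂₁ c₂ = -3 X 4`, such an `f` has `∂₀ f = ∂₀ c₂ · w`, where `w` satisfies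
the same equations and `∂₀ⁿ⁻¹ w = 0` whenever `∂₀ⁿ f = 0`. Inducting on `n ≤ p` (`∂₀ᵖ = 0`) gives
`w = ∑_{k < n-1} s_k c₂ᵏ` with `s_k ∈ A`, and then `f - ∑ s_k c₂ᵏ⁺¹ / (k + 1) ∈ A`, the
denominators `k + 1 < p` being invertible.
-/

theorem CharP.natCast_ne_zero_of_pos_of_lt {R : Type*} [AddMonoidWithOne R] (p : ℕ) [CharP R p]
    {n : ℕ} (h0 : 0 < n) (hn : n < p) : (n : R) ≠ 0 :=
  (CharP.cast_eq_zero_iff R p n).not.2 (Nat.not_dvd_of_pos_of_lt h0 hn)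

namespace Derivation

variable {R A : Type*} [CommSemiring R] [CommSemiring A] [Algebra R A]

@[simp]
theorem map_ofNat (D : Derivation R A A) (n : ℕ) [n.AtLeastTwo] : D (ofNat(n) : A) = 0 :=
  D.map_natCast n

theorem iterate_mul_of_apply_eq_zero (D : Derivation R A A) {a : A} (ha : D a = 0) (n : ℕ)
    (x : A) : D^[n] (a * x) = a * D^[n] x := by
  induction n generalizing x with
  | zero => rfl
  | succ n ih =>
    rw [Function.iterate_succ_apply, leibniz, ha, smul_zero, add_zero, smul_eq_mul, ih,
      Function.iterate_succ_apply]

end Derivation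

namespace MvPolynomial

variable {σ R : Type*} [CommRing R]

theorem pderiv_comm (i j : σ) (f : MvPolynomial σ R) :
    pderiv i (pderiv j f) = pderiv j (pderiv i f) := by
  classical
  have h : ⁅pderiv (R := R) i, pderiv (R := R) j⁆ = 0 := by
    apply derivation_ext
    intro k
    rw [Derivation.commutator_apply, pderiv_X, pderiv_X, Derivation.zero_apply]
    by_cases hik : i = k <;> by_cases hjk : j = k <;> simp [hik, hjk]
  simpa [Derivation.commutator_apply, sub_eq_zero] using congr($h f)

theorem pderiv_iterate_monomial (i : σ) (n : ℕ) (s : σ →₀ ℕ) (a : R) :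
    (pderiv i)^[n] (monomial s a) =
      monomial (s - Finsupp.single i n) (a * (s i).descFactorial n) := by
  induction n with
  | zero => simp
  | succ n ih =>
    rw [Function.iterate_succ_apply', ih, pderiv_monomial, tsub_tsub, ← Finsupp.single_add,
      Nat.descFactorial_succ, mul_assoc, Nat.cast_mul, mul_comm ((s i - n : ℕ) : R)]
    simp

theorem pderiv_iterate_char_eq_zero (p : ℕ) [CharP R p] (hp : 0 < p) (i : σ)
    (f : MvPolynomial σ R) : (pderiv i)^[p] f = 0 := by
  induction f using MvPolynomial.induction_on' with
  | monomial s a =>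
    have : ((s i).descFactorial p : R) = 0 := (CharP.cast_eq_zero_iff R p _).2
      ((Nat.dvd_factorial hp le_rfl).trans (Nat.factorial_dvd_descFactorial _ _))
    rw [pderiv_iterate_monomial, this, mul_zero, monomial_zero]
  | add f g hf hg => rw [iterate_map_add, hf, hg, add_zero]

theorem natCast_eq_zero_of_pderiv_eq_zero [NoZeroDivisors R] {i : σ} {f : MvPolynomial σ R}
    (h : pderiv i f = 0) {m : σ →₀ ℕ} (hm : m ∈ f.support) : (m i : R) = 0 := by
  classical
  rcases Nat.eq_zero_or_pos (m i) with h0 | h0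
  · simp [h0]
  have hm' : m - Finsupp.single i 1 + Finsupp.single i 1 = m :=
    tsub_add_cancel_of_le (Finsupp.single_le_iff.2 h0)
  have := coeff_pderiv (i := i) f (m - Finsupp.single i 1)
  rw [h, coeff_zero, hm'] at this
  rcases mul_eq_zero.1 this.symm with h' | h'
  · exact absurd h' (mem_support_iff.1 hm)
  · have hmi : (m - Finsupp.single i 1 : σ →₀ ℕ) i + 1 = m i := by simp; omega
    rwa [← hmi, Nat.cast_succ]

def pderivConstants (S : Set σ) : Subalgebra R (MvPolynomial σ R) where
  carrier := {f | ∀ i ∈ S, pderiv i f = 0}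
  mul_mem' hf hg i hi := by rw [pderiv_mul, hf i hi, hg i hi, zero_mul, mul_zero, add_zero]
  add_mem' hf hg i hi := by rw [map_add, hf i hi, hg i hi, add_zero]
  algebraMap_mem' _ _ _ := pderiv_C

theorem pderivConstants_eq_adjoin [NoZeroDivisors R] (p : ℕ) [CharP R p] (S : Set σ) :
    pderivConstants S = Algebra.adjoin R ((X · ^ p) '' S ∪ X '' Sᶜ) := by
  apply le_antisymm
  · intro f hf
    rw [f.as_sum]
    refine Subalgebra.sum_mem _ fun m hm => ?_
    rw [monomial_eq]
    refine mul_mem (Subalgebra.algebraMap_mem _ _) (prod_mem fun i _ => ?_)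
    change X i ^ m i ∈ _
    by_cases hi : i ∈ S
    · obtain ⟨k, hk⟩ := (CharP.cast_eq_zero_iff R p _).1
        (natCast_eq_zero_of_pderiv_eq_zero (hf i hi) hm)
      rw [hk, pow_mul]
      exact pow_mem (Algebra.subset_adjoin (Set.mem_union_left _ (Set.mem_image_of_mem _ hi))) _
    · exact pow_mem (Algebra.subset_adjoin (Set.mem_union_right _ (Set.mem_image_of_mem _ hi))) _
  · refine Algebra.adjoin_le ?_
    rintro _ (⟨i, -, rfl⟩ | ⟨i, hi, rfl⟩) j hj
    · rw [pderiv_pow, CharP.cast_eq_zero, zero_mul, zero_mul]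
    · exact pderiv_X_of_ne (ne_of_mem_of_not_mem hj hi).symm

/-- The `(i₀, i)` minors, `i ∈ S`, of the Jacobian of `(f, c)` vanish; when `∂ᵢ₀ c` is not a
zero divisor this says `df ∧ dc = 0` in the directions `S`. -/
def gradientParallel (S : Set σ) (i₀ : σ) (c : MvPolynomial σ R) :
    Subalgebra R (MvPolynomial σ R) where
  carrier := {f | ∀ i ∈ S, pderiv i f * pderiv i₀ c = pderiv i₀ f * pderiv i c}
  mul_mem' {f g} hf hg i hi := by
    rw [pderiv_mul, pderiv_mul]
    linear_combination g * hf i hi + f * hg i hi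
  add_mem' hf hg i hi := by
    rw [map_add, map_add]
    linear_combination hf i hi + hg i hi
  algebraMap_mem' _ _ _ := by rw [algebraMap_eq, pderiv_C, pderiv_C, zero_mul, zero_mul]

variable {S : Set σ} {i₀ : σ} {c : MvPolynomial σ R}

theorem mem_gradientParallel {f : MvPolynomial σ R} :
    f ∈ gradientParallel S i₀ c ↔
      ∀ i ∈ S, pderiv i f * pderiv i₀ c = pderiv i₀ f * pderiv i c := Iff.rfl

theorem self_mem_gradientParallel : c ∈ gradientParallel S i₀ c :=
  fun _ _ => mul_comm _ _

theorem pderivConstants_le_gradientParallel (hi₀ : i₀ ∈ S) :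
    pderivConstants S ≤ gradientParallel S i₀ c := fun f hf i hi => by
  rw [hf i hi, hf i₀ hi₀, zero_mul, zero_mul]

section Field

variable {K : Type*} [Field K] {c : MvPolynomial σ K}

theorem pderiv_eq_mul_of_mem_gradientParallel {f w : MvPolynomial σ K}
    (hf : f ∈ gradientParallel S i₀ c) (ha0 : pderiv i₀ c ≠ 0)
    (hw : pderiv i₀ f = pderiv i₀ c * w) {i : σ} (hi : i ∈ S) :
    pderiv i f = pderiv i c * w :=
  mul_right_cancel₀ ha0 (by linear_combination hf i hi + pderiv i c * hw)

theorem mem_gradientParallel_of_pderiv_eq_mul {f w : MvPolynomial σ K}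
    (hf : f ∈ gradientParallel S i₀ c) (ha : pderiv i₀ c ∈ pderivConstants S)
    (ha0 : pderiv i₀ c ≠ 0) (hw : pderiv i₀ f = pderiv i₀ c * w) :
    w ∈ gradientParallel S i₀ c := by
  intro i hi
  have hc : pderiv i₀ (pderiv i c) = 0 := by rw [pderiv_comm, ha i hi]
  have h := pderiv_comm i i₀ f
  rw [hw, pderiv_eq_mul_of_mem_gradientParallel hf ha0 hw hi, pderiv_mul, pderiv_mul, ha i hi,
    hc] at h
  linear_combination h

theorem pderiv_sum_inv_mul_pow_succ (p : ℕ) [CharP K p] {n : ℕ} (hn : n < p)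
    {s : ℕ → MvPolynomial σ K} (hs : ∀ k, s k ∈ pderivConstants S) {i : σ} (hi : i ∈ S) :
    pderiv i (∑ k ∈ Finset.range n, C ((k + 1 : K)⁻¹) * s k * c ^ (k + 1)) =
      pderiv i c * ∑ k ∈ Finset.range n, s k * c ^ k := by
  rw [map_sum, Finset.mul_sum]
  refine Finset.sum_congr rfl fun k hk => ?_
  have hk0 : (k + 1 : K) ≠ 0 := by
    exact_mod_cast CharP.natCast_ne_zero_of_pos_of_lt p k.succ_pos (by simp at hk; omega)
  have hinv : C ((k + 1 : K)⁻¹) * ((k + 1 : ℕ) : MvPolynomial σ K) = 1 := by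
    rw [← map_natCast C, ← map_mul, Nat.cast_succ, inv_mul_cancel₀ hk0, map_one]
  rw [pderiv_mul, pderiv_mul, pderiv_C, hs k i hi, pderiv_pow, Nat.add_sub_cancel]
  linear_combination (s k * c ^ k * pderiv i c) * hinv

theorem exists_sum_pow_of_pderiv_iterate_eq_zero (p : ℕ) [CharP K p] (hi₀ : i₀ ∈ S) {i₁ : σ}
    (hi₁ : i₁ ∈ S) (hcop : IsRelPrime (pderiv i₀ c) (pderiv i₁ c))
    (ha : pderiv i₀ c ∈ pderivConstants S) (ha0 : pderiv i₀ c ≠ 0) :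
    ∀ n ≤ p, ∀ f ∈ gradientParallel S i₀ c, (pderiv i₀)^[n] f = 0 →
      ∃ s : ℕ → MvPolynomial σ K, (∀ k, s k ∈ pderivConstants S) ∧
        f = ∑ k ∈ Finset.range n, s k * c ^ k := by
  intro n
  induction n with
  | zero => exact fun _ f _ hf => ⟨0, fun _ => zero_mem _, by simpa using hf⟩
  | succ n ih =>
    intro hn f hf hfn
    obtain ⟨w, hw⟩ : pderiv i₀ c ∣ pderiv i₀ f :=
      hcop.dvd_of_dvd_mul_right ⟨pderiv i₁ f, by linear_combination (hf i₁ hi₁).symm⟩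
    have hwn : (pderiv i₀)^[n] w = 0 := by
      rw [Function.iterate_succ_apply, hw,
        Derivation.iterate_mul_of_apply_eq_zero _ (ha i₀ hi₀)] at hfn
      exact (mul_eq_zero.1 hfn).resolve_left ha0
    obtain ⟨s, hs, rfl⟩ :=
      ih (by omega) w (mem_gradientParallel_of_pderiv_eq_mul hf ha ha0 hw) hwn
    set g := ∑ k ∈ Finset.range n, C ((k + 1 : K)⁻¹) * s k * c ^ (k + 1)
    have hg : f - g ∈ pderivConstants S := fun i hi => by
      rw [map_sub, pderiv_eq_mul_of_mem_gradientParallel hf ha0 hw hi,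
        pderiv_sum_inv_mul_pow_succ p (by omega) hs hi, sub_self]
    refine ⟨fun k => Nat.casesOn k (f - g) fun k => C ((k + 1 : K)⁻¹) * s k, ?_, ?_⟩
    · rintro (_ | k)
      exacts [hg, mul_mem (Subalgebra.algebraMap_mem _ _) (hs k)]
    · rw [Finset.sum_range_succ', pow_zero, mul_one]
      simp only [g, Nat.rec_zero]
      ring

theorem gradientParallel_eq_adjoin (p : ℕ) [CharP K p] (hp : 0 < p) (hi₀ : i₀ ∈ S) {i₁ : σ}
    (hi₁ : i₁ ∈ S) (hcop : IsRelPrime (pderiv i₀ c) (pderiv i₁ c))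
    (ha : pderiv i₀ c ∈ pderivConstants S) (ha0 : pderiv i₀ c ≠ 0) :
    gradientParallel S i₀ c =
      Algebra.adjoin K (insert c (pderivConstants (R := K) S : Set (MvPolynomial σ K))) := by
  refine le_antisymm (fun f hf => ?_) (Algebra.adjoin_le (Set.insert_subset
    self_mem_gradientParallel (pderivConstants_le_gradientParallel hi₀)))
  obtain ⟨s, hs, rfl⟩ := exists_sum_pow_of_pderiv_iterate_eq_zero p hi₀ hi₁ hcop ha ha0 p le_rfl
    f hf (pderiv_iterate_char_eq_zero p hp i₀ f)
  exact sum_mem fun k _ => mul_mem (Algebra.subset_adjoin (Set.mem_insert_of_mem _ (hs k)))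
    (pow_mem (Algebra.subset_adjoin (Set.mem_insert _ _)) _)

end Field

end MvPolynomial

theorem Dv_X (b : Module.Basis iv F L) (v : L) (j : iv) :
    Dv b v (X j) = Finsupp.linearCombination F X (b.repr ⁅v, b j⁆) := by
  simp [Dv, mkDerivation_X, Finsupp.linearCombination_apply, smul_eq_C_mul]

theorem Dv_apply [Fintype iv] (b : Module.Basis iv F L) (v : L) (f : MvPolynomial iv F) :
    Dv b v f = ∑ j, Finsupp.linearCombination F X (b.repr ⁅v, b j⁆) * pderiv j f := by
  classical
  have sum_apply : ∀ (D : iv → Derivation F (MvPolynomial iv F) (MvPolynomial iv F)) g,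
      (∑ j, D j) g = ∑ j, D j g := fun D g => by
    rw [← Derivation.coeFnAddMonoidHom_apply, map_sum, Finset.sum_apply]; rfl
  have h : Dv b v = ∑ j, Finsupp.linearCombination F (X (R := F)) (b.repr ⁅v, b j⁆) • pderiv j :=
    derivation_ext fun k => by
      simp [sum_apply, Derivation.smul_apply, Dv_X, pderiv_X, Pi.single_apply]
  simp [h, sum_apply, Derivation.smul_apply]

theorem mem_poissonCenter_iff [Fintype iv] (b : Module.Basis iv F L) (f : MvPolynomial iv F) :
    f ∈ poissonCenter b ↔ ∀ i, Dv b (b i) f = 0 := by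
  refine ⟨fun hf i => hf (b i), fun h v => ?_⟩
  rw [← b.sum_repr v, Dv_apply]
  simp only [sum_lie, smul_lie, map_sum, map_smul, smul_mul_assoc, Finset.sum_mul]
  rw [Finset.sum_comm]
  simp only [← Finset.smul_sum, ← Dv_apply, h, smul_zero, Finset.sum_const_zero]

theorem pderiv_g2c2 (i : Fin 6) :
    pderiv i (g2c2 F) = ![3 * X 5, -(3 * X 4), 2 * X 2, 0, -(3 * X 1), 3 * X 0] i := by
  fin_cases i <;> simp [g2c2, pderiv_X, mul_comm]

theorem g2_mem_poissonCenter_iff (b : Module.Basis (Fin 6) F L)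
    (hbr1 : ⁅b 0, b 1⁆ = (2 : F) • b 2) (hbr2 : ⁅b 0, b 2⁆ = (3 : F) • b 4)
    (hbr3 : ⁅b 0, b 3⁆ = b 1) (hbr4 : ⁅b 1, b 2⁆ = (3 : F) • b 5) (hbr5 : ⁅b 3, b 4⁆ = -b 5)
    (hz : ∀ i j : Fin 6, i < j →
      (i, j) ∉ ({(0, 1), (0, 2), (0, 3), (1, 2), (3, 4)} : Set (Fin 6 × Fin 6)) → ⁅b i, b j⁆ = 0)
    (f : MvPolynomial (Fin 6) F) :
    f ∈ poissonCenter b ↔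
      2 * X 2 * pderiv 1 f + 3 * X 4 * pderiv 2 f + X 1 * pderiv 3 f = 0 ∧
      -(2 * X 2 * pderiv 0 f) + 3 * X 5 * pderiv 2 f = 0 ∧
      -(3 * X 4 * pderiv 0 f) + -(3 * X 5 * pderiv 1 f) = 0 ∧
      -(X 1 * pderiv 0 f) + -(X 5 * pderiv 4 f) = 0 ∧
      pderiv 3 f = 0 := by
  have hz' : ∀ i j : Fin 6, j < i →
      (j, i) ∉ ({(0, 1), (0, 2), (0, 3), (1, 2), (3, 4)} : Set (Fin 6 × Fin 6)) → ⁅b i, b j⁆ = 0 :=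
    fun i j h h' => by rw [← lie_skew, hz j i h h', neg_zero]
  rw [mem_poissonCenter_iff]
  simp [Fin.forall_fin_succ, Dv_apply, Fin.sum_univ_six, hbr1, hbr2, hbr3, hbr4, hbr5, hz, hz',
    ← lie_skew (b 1) (b 0), ← lie_skew (b 2) (b 0), ← lie_skew (b 3) (b 0),
    ← lie_skew (b 2) (b 1), ← lie_skew (b 4) (b 3), smul_eq_C_mul, map_ofNat]

theorem g2_mem_gradientParallel_iff (h3 : (3 : F) ≠ 0) (f : MvPolynomial (Fin 6) F) :
    f ∈ gradientParallel {5}ᶜ 0 (g2c2 F) ↔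
      2 * X 2 * pderiv 1 f + 3 * X 4 * pderiv 2 f + X 1 * pderiv 3 f = 0 ∧
      -(2 * X 2 * pderiv 0 f) + 3 * X 5 * pderiv 2 f = 0 ∧
      -(3 * X 4 * pderiv 0 f) + -(3 * X 5 * pderiv 1 f) = 0 ∧
      -(X 1 * pderiv 0 f) + -(X 5 * pderiv 4 f) = 0 ∧
      pderiv 3 f = 0 := by
  have h3' : (3 : MvPolynomial (Fin 6) F) ≠ 0 := by
    rwa [← map_ofNat C, Ne, C_eq_zero]
  have h3X5 : (3 * X 5 : MvPolynomial (Fin 6) F) ≠ 0 := mul_ne_zero h3' (X_ne_zero _)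
  simp only [Fin.isValue, mem_gradientParallel, Set.mem_compl_iff, Set.mem_singleton_iff,
    pderiv_g2c2, Nat.succ_eq_add_one, Nat.reduceAdd, Matrix.cons_val_zero, Fin.forall_fin_succ, Fin.reduceEq,
    not_false_eq_true, imp_self, Matrix.cons_val_succ, Fin.succ_zero_eq_one, mul_neg, forall_const,
    Fin.succ_one_eq_two, Fin.reduceSucc, mul_zero, mul_eq_zero, h3', X_ne_zero, or_self, or_false,
    Matrix.cons_val_fin_one, not_true_eq_false, IsEmpty.forall_iff, and_self, and_true, true_and]
  constructor
  · rintro ⟨p1, p2, p3, p4⟩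
    refine ⟨mul_left_cancel₀ h3X5 ?_, by linear_combination p2, by linear_combination -p1,
      mul_left_cancel₀ h3' ?_, p3⟩
    · linear_combination 2 * X 2 * p1 + 3 * X 4 * p2 + 3 * X 1 * X 5 * p3
    · linear_combination -p4
  · rintro ⟨-, e1, e2, e3, e4⟩
    exact ⟨by linear_combination -e2, by linear_combination e1, e4, by linear_combination -3 * e3⟩

theorem pderivConstants_compl_five (p : ℕ) [CharP F p] :
    pderivConstants ({5}ᶜ : Set (Fin 6)) = g2SpN F p := by
  rw [pderivConstants_eq_adjoin p, g2SpN]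
  congr 1
  ext g
  simp only [Fin.isValue, compl_compl, Set.image_singleton, Set.union_singleton, Set.mem_insert_iff,
    Set.mem_image, Set.mem_compl_iff, Set.mem_singleton_iff, Fin.exists_fin_succ, Fin.reduceEq,
    not_false_eq_true, true_and, Fin.succ_zero_eq_one, Fin.succ_one_eq_two, Fin.reduceSucc,
    not_true_eq_false, false_and, IsEmpty.exists_iff, or_self, or_false]
  tauto

theorem g2_gradientParallel_eq_adjoin (p : ℕ) [CharP F p] (hp3 : 3 < p) :
    gradientParallel {5}ᶜ 0 (g2c2 F) =
      Algebra.adjoin F {X 0 ^ p, X 1 ^ p, X 2 ^ p, X 3 ^ p, X 4 ^ p, X 5, g2c2 F} := by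
  have h3 : IsUnit (3 : MvPolynomial (Fin 6) F) := by
    have : (3 : F) ≠ 0 := by exact_mod_cast CharP.natCast_ne_zero_of_pos_of_lt p three_pos hp3
    simpa [map_ofNat] using this.isUnit.map C
  have hcop : IsRelPrime (pderiv 0 (g2c2 F)) (pderiv 1 (g2c2 F)) := by
    rw [pderiv_g2c2, pderiv_g2c2, Matrix.cons_val_zero, Matrix.cons_val_one, Matrix.cons_val_zero,
      ← neg_mul, isRelPrime_mul_unit_left_left h3, isRelPrime_mul_unit_left_right h3.neg]
    exact X_prime.irreducible.isRelPrime_iff_not_dvd.2 (by simp)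
  have ha : pderiv 0 (g2c2 F) ∈ pderivConstants {5}ᶜ := by
    rw [pderivConstants_compl_five p, pderiv_g2c2]
    exact mul_mem (ofNat_mem _ 3) (Algebra.subset_adjoin (by simp))
  have ha0 : pderiv 0 (g2c2 F) ≠ 0 := by
    rw [pderiv_g2c2]
    exact mul_ne_zero h3.ne_zero (X_ne_zero _)
  rw [gradientParallel_eq_adjoin p (by omega) (by simp) (by simp) hcop ha ha0,
    pderivConstants_compl_five p, g2SpN, Algebra.adjoin_insert_adjoin]
  congr 1
  ext g
  simp only [Set.mem_insert_iff, Set.mem_singleton_iff]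
  tauto

theorem g2_nilradical_poissonCenter_eq_general (p : ℕ) [CharP F p] (hp3 : 3 < p)
    (b : Module.Basis (Fin 6) F L)
    (hbr1 : ⁅b 0, b 1⁆ = (2 : F) • b 2)
    (hbr2 : ⁅b 0, b 2⁆ = (3 : F) • b 4)
    (hbr3 : ⁅b 0, b 3⁆ = b 1)
    (hbr4 : ⁅b 1, b 2⁆ = (3 : F) • b 5)
    (hbr5 : ⁅b 3, b 4⁆ = -b 5)
    (hz : ∀ i j : Fin 6, i < j →
      (i, j) ∉ ({(0, 1), (0, 2), (0, 3), (1, 2), (3, 4)} : Set (Fin 6 × Fin 6)) → ⁅b i, b j⁆ = 0) :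
    poissonCenter b =
      Algebra.adjoin F {X 0 ^ p, X 1 ^ p, X 2 ^ p, X 3 ^ p, X 4 ^ p, X 5, g2c2 F} := by
  have h3 : (3 : F) ≠ 0 := by
    exact_mod_cast CharP.natCast_ne_zero_of_pos_of_lt p three_pos hp3
  rw [← g2_gradientParallel_eq_adjoin p hp3]
  exact Subalgebra.ext fun f => (g2_mem_poissonCenter_iff b hbr1 hbr2 hbr3 hbr4 hbr5 hz f).trans
    (g2_mem_gradientParallel_iff h3 f).symm

/-- Theorem 1.1(a), first part: for `p > 3` prime, the Poisson center of `S(𝔫)` for the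
nilradical `𝔫` of a Borel subalgebra of the simple Lie algebra of type `G₂` is the subalgebra
generated by `x₁ᵖ, …, x₅ᵖ, x₆` and `c₂`. -/
theorem g2_nilradical_poissonCenter_eq (p : ℕ) [CharP F p] (hp : p.Prime) (hp3 : 3 < p)
    (b : Module.Basis (Fin 6) F L)
    (hbr1 : ⁅b 0, b 1⁆ = (2 : F) • b 2)
    (hbr2 : ⁅b 0, b 2⁆ = (3 : F) • b 4)
    (hbr3 : ⁅b 0, b 3⁆ = b 1)
    (hbr4 : ⁅b 1, b 2⁆ = (3 : F) • b 5)
    (hbr5 : ⁅b 3, b 4⁆ = -b 5)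
    (hz : ∀ i j : Fin 6, i < j →
      (i, j) ∉ ({(0, 1), (0, 2), (0, 3), (1, 2), (3, 4)} : Set (Fin 6 × Fin 6)) → ⁅b i, b j⁆ = 0) :
    poissonCenter b =
      Algebra.adjoin F {X 0 ^ p, X 1 ^ p, X 2 ^ p, X 3 ^ p, X 4 ^ p, X 5, g2c2 F} :=
  g2_nilradical_poissonCenter_eq_general p hp3 b hbr1 hbr2 hbr3 hbr4 hbr5 hz
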